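/- (Application of the main theorem to uniform exponential dichotomy.) Assume the linear difference equation admits a uniform exponential dichotomy with constants D, λ > 0, that the Lipschitz constants are constant, c_m = C > 0 for all m ∈ ℤ⁺, and that K(1) · C D (1 + e^{−λ})/(1 − e^{−λ}) < 1, where K is the function from axiom (A). Then there exists η ∈ 𝓜 such that, with h^n = Id_{F_n} + η^n, for every m ≥ n ≥ 0 and every φ ∈ F_n one has h^m(𝒜(m,n)φ) = R(m,n)(h^n(φ)); moreover each h^n : F_n → B is one-to-one. -/

import Mathlib

noncomputable section

open Filter

/-- The nonpositive integers. -/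
abbrev Zneg : Type := {j : ℤ // j ≤ 0}

/-- The segment `x_m : ℤ⁻ → X` of a sequence `x : ℤ → X`, i.e. `x_m(j) = x(m+j)`. -/
def seg {X : Type*} (x : ℤ → X) (m : ℤ) : Zneg → X := fun j => x (m + j.1)

variable {X : Type*} [NormedAddCommGroup X] [NormedSpace ℝ X] [CompleteSpace X]
variable {𝓑 : Type*} [NormedAddCommGroup 𝓑] [NormedSpace ℝ 𝓑] [CompleteSpace 𝓑]

/-- Axiom (A) for a Banach space `𝓑` of sequences `ℤ⁻ → X` (represented through an injective
linear map `ι : 𝓑 → (ℤ⁻ → X)`), with constants `J > 0` and `K, M : ℤ⁺ → [0,∞)`: whenever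
`x : ℤ → X` has `x_0 ∈ 𝓑`, then `x_n ∈ 𝓑` and
`J‖x(n)‖ ≤ ‖x_n‖_𝓑 ≤ K(n) sup_{0≤j≤n}‖x(j)‖ + M(n)‖x_0‖_𝓑` for all `n ∈ ℤ⁺`. -/
def AxiomA (ι : 𝓑 →ₗ[ℝ] (Zneg → X)) (J : ℝ) (K M : ℕ → ℝ) : Prop :=
  0 < J ∧ (∀ n, 0 ≤ K n) ∧ (∀ n, 0 ≤ M n) ∧
    ∀ (x : ℤ → X) (φ₀ : 𝓑), ι φ₀ = seg x 0 →
      ∀ n : ℕ, ∃ φₙ : 𝓑, ι φₙ = seg x (n : ℤ) ∧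
        J * ‖x (n : ℤ)‖ ≤ ‖φₙ‖ ∧
        ‖φₙ‖ ≤ K n * (⨆ j : Fin (n + 1), ‖x ((j : ℕ) : ℤ)‖) + M n * ‖φ₀‖

/-- The sequence `Γv : ℤ⁻ → X`, `(Γv)(0) = v` and `(Γv)(j) = 0` for `j < 0`. -/
def gammaSeq {X : Type*} [NormedAddCommGroup X] (v : X) : Zneg → X :=
  fun j => if j.1 = 0 then v else 0

/-- `x : ℤ → X` solves the linear equation `x(m+1) = A_m x_m` for all `m ≥ n`,
with all segments `x_m` (for `m ≥ n`) belonging to `𝓑`. -/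
def IsLinSolFrom (ι : 𝓑 →ₗ[ℝ] (Zneg → X)) (A : ℕ → 𝓑 →L[ℝ] X)
    (x : ℤ → X) (n : ℕ) : Prop :=
  ∀ m : ℕ, n ≤ m → ∃ ψ : 𝓑, ι ψ = seg x (m : ℤ) ∧ x ((m : ℤ) + 1) = A m ψ

/-- `x : ℤ → X` solves the semilinear equation `x(m+1) = A_m x_m + f_m(x_m)` for all `m ≥ n`,
with all segments `x_m` (for `m ≥ n`) belonging to `𝓑`. -/
def IsSemiSolFrom (ι : 𝓑 →ₗ[ℝ] (Zneg → X)) (A : ℕ → 𝓑 →L[ℝ] X)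
    (f : ℕ → 𝓑 → X) (x : ℤ → X) (n : ℕ) : Prop :=
  ∀ m : ℕ, n ≤ m → ∃ ψ : 𝓑, ι ψ = seg x (m : ℤ) ∧ x ((m : ℤ) + 1) = A m ψ + f m ψ

/-- The Green operator `𝒢(m,n) = 𝒜(m,n)P_n` for `m ≥ n`, `𝒢(m,n) = -𝒜(m,n)Q_n` for `m < n`. -/
def Green (𝒜 : ℕ → ℕ → 𝓑 →L[ℝ] 𝓑) (P : ℕ → 𝓑 →L[ℝ] 𝓑) (m n : ℕ) : 𝓑 →L[ℝ] 𝓑 :=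
  if n ≤ m then (𝒜 m n).comp (P n)
  else -((𝒜 m n).comp (ContinuousLinearMap.id ℝ 𝓑 - P n))

/-- `F_n = Ker P_n`. -/
abbrev Fn (P : ℕ → 𝓑 →L[ℝ] 𝓑) (n : ℕ) := {φ : 𝓑 // P n φ = 0}

/-- `𝒜(m,n)` restricted to a map `F_n → F_m` (using the kernel invariance). -/
def kerMap (𝒜 : ℕ → ℕ → 𝓑 →L[ℝ] 𝓑) (P : ℕ → 𝓑 →L[ℝ] 𝓑)
    (hker : ∀ (m n : ℕ) (φ : 𝓑), P n φ = 0 → P m (𝒜 m n φ) = 0)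
    (m n : ℕ) (φ : Fn P n) : Fn P m :=
  ⟨𝒜 m n φ.1, hker m n φ.1 φ.2⟩

/-- Membership in `𝓜`: `η = (η^n)_{n∈ℤ⁺}` with `η^n : F_n → 𝓑` continuous and
`‖η‖_∞ = sup_{n,φ} ‖η^n(φ)‖ < ∞`. -/
def inM (P : ℕ → 𝓑 →L[ℝ] 𝓑) (η : ∀ n : ℕ, Fn P n → 𝓑) : Prop :=
  (∀ n, Continuous (η n)) ∧ ∃ C : ℝ, ∀ (n : ℕ) (φ : Fn P n), ‖η n φ‖ ≤ C

/-- The supremum norm `‖η‖_∞ = sup_{n∈ℤ⁺, φ∈F_n} ‖η^n(φ)‖` on `𝓜`. -/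
def Mnorm (P : ℕ → 𝓑 →L[ℝ] 𝓑) (η : ∀ n : ℕ, Fn P n → 𝓑) : ℝ :=
  ⨆ p : Σ n : ℕ, Fn P n, ‖η p.1 p.2‖

/-- The map `F(η)(n,φ) = Σ_{m∈ℤ⁺} 𝒢(n,m+1) Γ f_m(𝒜(m,n)φ + η^m(𝒜(m,n)φ))` for `φ ∈ F_n`. -/
def Fmap (𝒜 : ℕ → ℕ → 𝓑 →L[ℝ] 𝓑) (P : ℕ → 𝓑 →L[ℝ] 𝓑)
    (hker : ∀ (m n : ℕ) (φ : 𝓑), P n φ = 0 → P m (𝒜 m n φ) = 0)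
    (γ : X → 𝓑) (f : ℕ → 𝓑 → X)
    (η : ∀ n : ℕ, Fn P n → 𝓑) (n : ℕ) (φ : Fn P n) : 𝓑 :=
  ∑' m : ℕ, Green 𝒜 P n (m + 1)
      (γ (f m (𝒜 m n φ.1 + η m (kerMap 𝒜 P hker m n φ))))


/-- auxiliary distance `|m - (k+1)|` on naturals -/
def dd (m k : ℕ) : ℕ := if k < m then m - (k+1) else (k+1) - m

lemma dd_pow_le {r : ℝ} (h0 : 0 < r) (h1 : r < 1) (m k : ℕ) :
    r ^ dd m k ≤ (r ^ m)⁻¹ * r ^ k := by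
  rw [dd]
  split_ifs with h
  · have h2 : r ^ (m - (k+1)) ≤ 1 := pow_le_one₀ h0.le h1.le
    have h3 : (1:ℝ) ≤ (r ^ m)⁻¹ * r ^ k := by
      rw [← div_eq_inv_mul, le_div_iff₀ (pow_pos h0 m), one_mul]
      simpa using pow_le_pow_of_le_one h0.le h1.le h.le
    linarith
  · push_neg at h
    have : r ^ ((k+1) - m) * r ^ m = r ^ (k+1) := by
      rw [← pow_add]; congr 1; omega
    have hrm : (0:ℝ) < r ^ m := pow_pos h0 m
    rw [← div_eq_inv_mul, le_div_iff₀ hrm]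
    calc r ^ ((k+1)-m) * r ^ m = r ^ (k+1) := this
      _ ≤ r ^ k := by
        rw [pow_succ]
        nlinarith [pow_pos h0 k]

lemma dd_summable {r : ℝ} (h0 : 0 < r) (h1 : r < 1) (m : ℕ) :
    Summable (fun k => r ^ dd m k) := by
  apply Summable.of_nonneg_of_le (fun k => by positivity) (dd_pow_le h0 h1 m)
  exact (summable_geometric_of_lt_one h0.le h1).mul_left _

lemma dd_tsum_le {r : ℝ} (h0 : 0 < r) (h1 : r < 1) (m : ℕ) :
    ∑' k, r ^ dd m k ≤ (1 + r) / (1 - r) := by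
  have hs := dd_summable h0 h1 m
  rw [← Summable.sum_add_tsum_nat_add m hs]
  have h1r : (0:ℝ) < 1 - r := by linarith
  have e1 : ∑ k ∈ Finset.range m, r ^ dd m k ≤ 1 / (1 - r) := by
    have : ∀ k ∈ Finset.range m, r ^ dd m k = r ^ (m - 1 - k) := by
      intro k hk
      rw [Finset.mem_range] at hk
      congr 1
      rw [dd, if_pos hk]; omega
    rw [Finset.sum_congr rfl this, Finset.sum_range_reflect (fun i => r ^ i) m]
    have := geom_sum_mul r m
    have hle : ∑ i ∈ Finset.range m, r ^ i = (1 - r ^ m) / (1 - r) := by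
      field_simp
      nlinarith [geom_sum_mul r m]
    rw [hle, div_le_div_iff₀ h1r h1r]
    nlinarith [pow_pos h0 m]
  have e2 : ∑' (k : ℕ), r ^ dd m (k + m) = r / (1 - r) := by
    have : ∀ k : ℕ, r ^ dd m (k + m) = r * r ^ k := by
      intro k
      rw [dd, if_neg (by omega)]
      have : k + m + 1 - m = k + 1 := by omega
      rw [this, pow_succ]; ring
    rw [tsum_congr this, tsum_mul_left, tsum_geometric_of_lt_one h0.le h1]
    rw [div_eq_mul_inv]
  rw [e2]
  have : (1+r)/(1-r) = 1/(1-r) + r/(1-r) := by field_simp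
  linarith
set_option linter.unusedSectionVars false
section SolLemmas

variable {X : Type*} [NormedAddCommGroup X] [NormedSpace ℝ X] [CompleteSpace X]
variable {𝓑 : Type*} [NormedAddCommGroup 𝓑] [NormedSpace ℝ 𝓑] [CompleteSpace 𝓑]
variable {ι : 𝓑 →ₗ[ℝ] (Zneg → X)} {J : ℝ} {K M : ℕ → ℝ}
variable {A : ℕ → 𝓑 →L[ℝ] X}

/-- one-step extension inside 𝓑, from Axiom A -/
lemma exists_ext (hAx : AxiomA ι J K M) (ψ : 𝓑) (v : X) :
    ∃ ψ' : 𝓑, ι ψ' ⟨0, le_refl 0⟩ = v ∧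
      ∀ j : Zneg, ∀ _ : j.1 < 0, ι ψ' j = ι ψ ⟨j.1 + 1, by omega⟩ := by
  classical
  set x : ℤ → X := fun j => if hj : j ≤ 0 then ι ψ ⟨j, hj⟩ else v with hx
  have h0 : ι ψ = seg x 0 := by
    funext j
    simp only [seg, hx, zero_add]
    rw [dif_pos j.2]
  obtain ⟨φ₁, hφ₁, -, -⟩ := hAx.2.2.2 x ψ h0 1
  refine ⟨φ₁, ?_, fun j hj => ?_⟩
  · rw [hφ₁]
    simp only [seg, hx, Nat.cast_one, add_zero]
    rw [dif_neg (by omega)]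
  · rw [hφ₁]
    simp only [seg, hx, Nat.cast_one]
    rw [dif_pos (by omega)]
    exact congrArg (ι ψ) (Subtype.ext (by simp; omega))

/-- existence of forward linear solutions through any `ρ` at any time `n` -/
lemma exists_linSol (hAx : AxiomA ι J K M) (A : ℕ → 𝓑 →L[ℝ] X) (ρ : 𝓑) (n : ℕ) :
    ∃ y : ℤ → X, ι ρ = seg y (n : ℤ) ∧ IsLinSolFrom ι A y n := by
  classical
  choose ext hext0 hexts using fun (ψ : 𝓑) (v : X) => exists_ext hAx ψ v
  set Ψ : ℕ → 𝓑 := fun k => Nat.rec ρ (fun k ψk => ext ψk (A (n + k) ψk)) k with hΨ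
  have hΨ0 : Ψ 0 = ρ := rfl
  have hΨs : ∀ k, Ψ (k + 1) = ext (Ψ k) (A (n + k) (Ψ k)) := fun k => rfl
  set y : ℤ → X := fun j =>
    if hj : j ≤ (n : ℤ) then ι ρ ⟨j - n, by omega⟩ else ι (Ψ (j - n).toNat) ⟨0, le_refl 0⟩
    with hy
  have hseg : ∀ k, ι (Ψ k) = seg y ((n : ℤ) + k) := by
    intro k
    induction k with
    | zero =>
      funext j
      simp only [seg, hΨ0, hy, Nat.cast_zero, add_zero]
      rw [dif_pos (by omega : (n : ℤ) + j.1 ≤ (n : ℤ))]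
      exact congrArg (ι ρ) (Subtype.ext (by simp))
    | succ k ih =>
      funext j
      rcases eq_or_lt_of_le j.2 with h | h
      · -- j = 0
        have hj0 : j = ⟨0, le_refl 0⟩ := Subtype.ext h
        subst hj0
        rw [hΨs k, hext0 (Ψ k) (A (n+k) (Ψ k))]
        show _ = y ((n : ℤ) + (k+1 : ℕ) + 0)
        simp only [hy]
        rw [dif_neg (by push_cast; omega)]
        have ht : (((n : ℤ) + (k+1 : ℕ) + 0 - n).toNat) = k + 1 := by push_cast; omega
        rw [ht, hΨs k, hext0 (Ψ k) (A (n+k) (Ψ k))]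
      · rw [hΨs k, hexts (Ψ k) (A (n+k) (Ψ k)) j h]
        have := congrFun ih ⟨j.1 + 1, by omega⟩
        rw [this]
        show seg y ((n:ℤ) + k) _ = seg y ((n:ℤ) + (k+1:ℕ)) j
        simp only [seg]
        congr 1
        push_cast
        ring
  have hbase : ι ρ = seg y (n : ℤ) := by
    have := hseg 0
    rwa [hΨ0, Nat.cast_zero, add_zero] at this
  refine ⟨y, hbase, ?_⟩
  intro m hm
  obtain ⟨k, rfl⟩ := Nat.exists_eq_add_of_le hm
  refine ⟨Ψ k, ?_, ?_⟩
  · rw [hseg k]; norm_cast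
  · have h1 : ((n + k : ℕ) : ℤ) + 1 = (n : ℤ) + ((k+1 : ℕ) : ℤ) := by push_cast; ring
    rw [h1]
    have := congrFun (hseg (k+1)) ⟨0, le_refl 0⟩
    simp only [seg, add_zero] at this
    rw [← this, hΨs k, hext0 (Ψ k) (A (n+k) (Ψ k))]

end SolLemmas
section CocLemmas
variable {X : Type*} [NormedAddCommGroup X] [NormedSpace ℝ X] [CompleteSpace X]
variable {𝓑 : Type*} [NormedAddCommGroup 𝓑] [NormedSpace ℝ 𝓑] [CompleteSpace 𝓑]
variable {ι : 𝓑 →ₗ[ℝ] (Zneg → X)} {J : ℝ} {K M : ℕ → ℝ}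
variable {A : ℕ → 𝓑 →L[ℝ] X} {𝒜 : ℕ → ℕ → 𝓑 →L[ℝ] 𝓑} {P : ℕ → 𝓑 →L[ℝ] 𝓑}

/-- `𝒜 m a ρ` is the segment at `m` of any linear solution through `ρ` at `a`. -/
lemma segA (hι : Function.Injective ι) (hAx : AxiomA ι J K M)
    (hsolA : ∀ (k : ℕ) (ψ : 𝓑) (y : ℤ → X), ι ψ = seg y (k : ℤ) → IsLinSolFrom ι A y k →
      ∀ m : ℕ, k ≤ m → ι (𝒜 m k ψ) = seg y (m : ℤ)) :
    ∀ (ρ : 𝓑) (a : ℕ), ∃ y : ℤ → X, ι ρ = seg y (a : ℤ) ∧ IsLinSolFrom ι A y a ∧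
      ∀ m : ℕ, a ≤ m → ι (𝒜 m a ρ) = seg y (m : ℤ) := by
  intro ρ a
  obtain ⟨y, h1, h2⟩ := exists_linSol hAx A ρ a
  exact ⟨y, h1, h2, hsolA a ρ y h1 h2⟩

lemma A_self (hι : Function.Injective ι) (hAx : AxiomA ι J K M)
    (hsolA : ∀ (k : ℕ) (ψ : 𝓑) (y : ℤ → X), ι ψ = seg y (k : ℤ) → IsLinSolFrom ι A y k →
      ∀ m : ℕ, k ≤ m → ι (𝒜 m k ψ) = seg y (m : ℤ)) (ρ : 𝓑) (a : ℕ) :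
    𝒜 a a ρ = ρ := by
  obtain ⟨y, h1, h2, h3⟩ := segA hι hAx hsolA ρ a
  exact hι ((h3 a le_rfl).trans h1.symm)

lemma A_cocycle (hι : Function.Injective ι) (hAx : AxiomA ι J K M)
    (hsolA : ∀ (k : ℕ) (ψ : 𝓑) (y : ℤ → X), ι ψ = seg y (k : ℤ) → IsLinSolFrom ι A y k →
      ∀ m : ℕ, k ≤ m → ι (𝒜 m k ψ) = seg y (m : ℤ))
    (ρ : 𝓑) {a b c : ℕ} (hab : a ≤ b) (hbc : b ≤ c) :
    𝒜 c b (𝒜 b a ρ) = 𝒜 c a ρ := by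
  obtain ⟨y, h1, h2, h3⟩ := segA hι hAx hsolA ρ a
  have h2b : IsLinSolFrom ι A y b := fun m hm => h2 m (hab.trans hm)
  have hb := h3 b hab
  have := hsolA b (𝒜 b a ρ) y hb h2b c hbc
  exact hι (this.trans (h3 c (hab.trans hbc)).symm)

/-- `𝒜 (m+1) m ψ` is the one-step extension of `ψ` by `A m ψ`. -/
lemma A_step (hι : Function.Injective ι) (hAx : AxiomA ι J K M)
    (hsolA : ∀ (k : ℕ) (ψ : 𝓑) (y : ℤ → X), ι ψ = seg y (k : ℤ) → IsLinSolFrom ι A y k →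
      ∀ m : ℕ, k ≤ m → ι (𝒜 m k ψ) = seg y (m : ℤ)) (ψ : 𝓑) (m : ℕ) :
    (ι (𝒜 (m+1) m ψ) ⟨0, le_refl 0⟩ = A m ψ) ∧
      ∀ j : Zneg, ∀ _ : j.1 < 0, ι (𝒜 (m+1) m ψ) j = ι ψ ⟨j.1 + 1, by omega⟩ := by
  obtain ⟨y, h1, h2, h3⟩ := segA hι hAx hsolA ψ m
  have hm1 := h3 (m+1) (Nat.le_succ m)
  obtain ⟨ψ', hψ'1, hψ'2⟩ := h2 m le_rfl
  have hψ' : ψ' = ψ := hι (hψ'1.trans h1.symm)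
  constructor
  · rw [hm1]
    show y (((m+1:ℕ) : ℤ) + 0) = _
    have : (((m+1:ℕ) : ℤ) + 0) = (m : ℤ) + 1 := by push_cast; ring
    rw [this, hψ'2, hψ']
  · intro j hj
    rw [hm1, h1]
    show y (((m+1:ℕ):ℤ) + j.1) = y ((m : ℤ) + (j.1 + 1))
    congr 1
    push_cast
    ring
end CocLemmas
section KerLemmas
variable {𝓑 : Type*} [NormedAddCommGroup 𝓑] [NormedSpace ℝ 𝓑] [CompleteSpace 𝓑]
variable {𝒜 : ℕ → ℕ → 𝓑 →L[ℝ] 𝓑} {P : ℕ → 𝓑 →L[ℝ] 𝓑}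

lemma claimA
    (hCoc : ∀ (ρ : 𝓑) {a b c : ℕ}, a ≤ b → b ≤ c → 𝒜 c b (𝒜 b a ρ) = 𝒜 c a ρ)
    (hker : ∀ (m n : ℕ) (φ : 𝓑), P n φ = 0 → P m (𝒜 m n φ) = 0)
    (hinv₁ : ∀ m n : ℕ, m ≤ n → ∀ φ : 𝓑, P n φ = 0 → 𝒜 n m (𝒜 m n φ) = φ)
    (hinv₂ : ∀ m n : ℕ, m ≤ n → ∀ φ : 𝓑, P m φ = 0 → 𝒜 m n (𝒜 n m φ) = φ)
    (n₀ : ℕ) (φ : 𝓑) (hφ : P n₀ φ = 0) {a b : ℕ} (hab : a ≤ b) :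
    𝒜 b a (𝒜 a n₀ φ) = 𝒜 b n₀ φ := by
  rcases le_or_gt n₀ a with h1 | h1
  · exact hCoc φ h1 hab
  rcases le_or_gt n₀ b with h2 | h2
  · rw [← hCoc (𝒜 a n₀ φ) h1.le h2, hinv₁ a n₀ h1.le φ hφ]
  · -- a ≤ b < n₀
    have hx : P b (𝒜 b a (𝒜 a n₀ φ)) = 0 := hker b a _ (hker a n₀ φ hφ)
    have hy : P b (𝒜 b n₀ φ) = 0 := hker b n₀ φ hφ
    have e1 : 𝒜 n₀ b (𝒜 b a (𝒜 a n₀ φ)) = φ := by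
      rw [hCoc (𝒜 a n₀ φ) hab h2.le, hinv₁ a n₀ h1.le φ hφ]
    have e2 : 𝒜 n₀ b (𝒜 b n₀ φ) = φ := hinv₁ b n₀ h2.le φ hφ
    have := hinv₂ b n₀ h2.le _ hx
    rw [← this, e1, ← e2, hinv₂ b n₀ h2.le _ hy]

lemma claimB
    (hCoc : ∀ (ρ : 𝓑) {a b c : ℕ}, a ≤ b → b ≤ c → 𝒜 c b (𝒜 b a ρ) = 𝒜 c a ρ)
    (hker : ∀ (m n : ℕ) (φ : 𝓑), P n φ = 0 → P m (𝒜 m n φ) = 0)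
    (hinv₁ : ∀ m n : ℕ, m ≤ n → ∀ φ : 𝓑, P n φ = 0 → 𝒜 n m (𝒜 m n φ) = φ)
    (hinv₂ : ∀ m n : ℕ, m ≤ n → ∀ φ : 𝓑, P m φ = 0 → 𝒜 m n (𝒜 n m φ) = φ)
    (n₀ : ℕ) (φ : 𝓑) (hφ : P n₀ φ = 0) {a b : ℕ} (hab : a ≤ b) :
    𝒜 a b (𝒜 b n₀ φ) = 𝒜 a n₀ φ := by
  have hx : P a (𝒜 a b (𝒜 b n₀ φ)) = 0 := hker a b _ (hker b n₀ φ hφ)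
  have hy : P a (𝒜 a n₀ φ) = 0 := hker a n₀ φ hφ
  have e1 : 𝒜 b a (𝒜 a b (𝒜 b n₀ φ)) = 𝒜 b n₀ φ :=
    hinv₁ a b hab _ (hker b n₀ φ hφ)
  have e2 : 𝒜 b a (𝒜 a n₀ φ) = 𝒜 b n₀ φ :=
    claimA hCoc hker hinv₁ hinv₂ n₀ φ hφ hab
  have := hinv₂ a b hab _ hx
  rw [← this, e1, ← e2, hinv₂ a b hab _ hy]

lemma xiRel
    (hCoc : ∀ (ρ : 𝓑) {a b c : ℕ}, a ≤ b → b ≤ c → 𝒜 c b (𝒜 b a ρ) = 𝒜 c a ρ)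
    (hker : ∀ (m n : ℕ) (φ : 𝓑), P n φ = 0 → P m (𝒜 m n φ) = 0)
    (hinv₁ : ∀ m n : ℕ, m ≤ n → ∀ φ : 𝓑, P n φ = 0 → 𝒜 n m (𝒜 m n φ) = φ)
    (hinv₂ : ∀ m n : ℕ, m ≤ n → ∀ φ : 𝓑, P m φ = 0 → 𝒜 m n (𝒜 n m φ) = φ)
    (n₀ : ℕ) (φ : 𝓑) (hφ : P n₀ φ = 0) (k l : ℕ) :
    𝒜 k l (𝒜 l n₀ φ) = 𝒜 k n₀ φ := by
  rcases le_or_gt l k with h | h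
  · exact claimA hCoc hker hinv₁ hinv₂ n₀ φ hφ h
  · exact claimB hCoc hker hinv₁ hinv₂ n₀ φ hφ h.le

lemma green_chain
    (hself : ∀ (ρ : 𝓑) (a : ℕ), 𝒜 a a ρ = ρ)
    (hCoc : ∀ (ρ : 𝓑) {a b c : ℕ}, a ≤ b → b ≤ c → 𝒜 c b (𝒜 b a ρ) = 𝒜 c a ρ)
    (hproj : ∀ n, (P n).comp (P n) = P n)
    (hker : ∀ (m n : ℕ) (φ : 𝓑), P n φ = 0 → P m (𝒜 m n φ) = 0)
    (hinv₁ : ∀ m n : ℕ, m ≤ n → ∀ φ : 𝓑, P n φ = 0 → 𝒜 n m (𝒜 m n φ) = φ)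
    (hinv₂ : ∀ m n : ℕ, m ≤ n → ∀ φ : 𝓑, P m φ = 0 → 𝒜 m n (𝒜 n m φ) = φ)
    (χ : 𝓑) (m k : ℕ) :
    Green 𝒜 P (m+1) (k+1) χ =
      𝒜 (m+1) m (Green 𝒜 P m (k+1) χ) + (if k = m then χ else 0) := by
  have hQ : ∀ n (χ : 𝓑), P n (χ - P n χ) = 0 := by
    intro n χ
    have := congrFun (congrArg DFunLike.coe (hproj n)) χ
    simp only [ContinuousLinearMap.comp_apply] at this
    rw [map_sub, this, sub_self]
  rcases lt_trichotomy k m with h | h | h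
  · rw [Green, Green, if_pos (by omega), if_pos (by omega), if_neg (by omega)]
    simp only [ContinuousLinearMap.comp_apply, add_zero]
    exact (hCoc (P (k+1) χ) (by omega) (by omega)).symm
  · subst h
    rw [Green, Green, if_pos le_rfl, if_neg (by omega), if_pos rfl]
    simp only [ContinuousLinearMap.comp_apply, ContinuousLinearMap.neg_apply,
      ContinuousLinearMap.sub_apply, ContinuousLinearMap.coe_id', id_eq, map_neg]
    rw [hself (P (k+1) χ) (k+1)]
    rw [hinv₁ k (k+1) (Nat.le_succ k) _ (hQ (k+1) χ)]
    abel
  · rw [Green, Green, if_neg (by omega), if_neg (by omega), if_neg (by omega)]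
    simp only [ContinuousLinearMap.comp_apply, ContinuousLinearMap.neg_apply, map_neg, add_zero]
    congr 1
    exact (claimA hCoc hker hinv₁ hinv₂ (k+1) _ (hQ (k+1) χ) (Nat.le_succ m)).symm
end KerLemmas
section GamLemmas
variable {X : Type*} [NormedAddCommGroup X] [NormedSpace ℝ X] [CompleteSpace X]
variable {𝓑 : Type*} [NormedAddCommGroup 𝓑] [NormedSpace ℝ 𝓑] [CompleteSpace 𝓑]
variable {ι : 𝓑 →ₗ[ℝ] (Zneg → X)} {J : ℝ} {K M : ℕ → ℝ}

lemma gamma_norm_le (hι : Function.Injective ι) (hAx : AxiomA ι J K M)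
    {γ : X → 𝓑} (hγ : ∀ v : X, ι (γ v) = gammaSeq v) (v : X) :
    ‖γ v‖ ≤ K 1 * ‖v‖ := by
  classical
  set x : ℤ → X := fun j => if j = 1 then v else 0 with hx
  have h0 : ι (0 : 𝓑) = seg x 0 := by
    funext j
    simp only [seg, hx, zero_add, map_zero]
    rw [if_neg (by have := j.2; omega)]
    rfl
  obtain ⟨φ₁, hφ₁, -, hb⟩ := hAx.2.2.2 x 0 h0 1
  have hφγ : φ₁ = γ v := by
    apply hι
    rw [hφ₁, hγ]
    funext j
    simp only [seg, gammaSeq, hx, Nat.cast_one]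
    by_cases hj : j.1 = 0
    · rw [if_pos (by omega), if_pos hj]
    · rw [if_neg (by omega), if_neg hj]
  rw [← hφγ]
  calc ‖φ₁‖ ≤ K 1 * (⨆ j : Fin 2, ‖x ((j : ℕ) : ℤ)‖) + M 1 * ‖(0:𝓑)‖ := hb
    _ ≤ K 1 * ‖v‖ + 0 := by
        gcongr
        · exact hAx.2.1 1
        · apply ciSup_le
          intro j
          fin_cases j
          · simp [hx]
          · simp [hx]
        · simp
    _ = K 1 * ‖v‖ := by ring

lemma gamma_sub (hι : Function.Injective ι)
    {γ : X → 𝓑} (hγ : ∀ v : X, ι (γ v) = gammaSeq v) (u v : X) :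
    γ (u - v) = γ u - γ v := by
  apply hι
  rw [map_sub, hγ, hγ, hγ]
  funext j
  simp only [gammaSeq, Pi.sub_apply]
  split <;> simp

lemma green_norm {𝒜 : ℕ → ℕ → 𝓑 →L[ℝ] 𝓑} {P : ℕ → 𝓑 →L[ℝ] 𝓑} {D lam : ℝ}
    (hdich₁ : ∀ m n : ℕ, n ≤ m →
      ‖(𝒜 m n).comp (P n)‖ ≤ D * Real.exp (-lam * ((m : ℝ) - (n : ℝ))))
    (hdich₂ : ∀ m n : ℕ, m < n →
      ‖(𝒜 m n).comp (ContinuousLinearMap.id ℝ 𝓑 - P n)‖ ≤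
        D * Real.exp (-lam * ((n : ℝ) - (m : ℝ))))
    (m k : ℕ) :
    ‖Green 𝒜 P m (k+1)‖ ≤ D * Real.exp (-lam) ^ dd m k := by
  rcases le_or_gt (k+1) m with h | h
  · rw [Green, if_pos h]
    refine (hdich₁ m (k+1) h).trans ?_
    rw [dd, if_pos (by omega), ← Real.exp_nat_mul]
    apply le_of_eq
    congr 1
    push_cast [Nat.cast_sub (by omega : k+1 ≤ m)]
    ring
  · rw [Green, if_neg (by omega), norm_neg]
    refine (hdich₂ m (k+1) h).trans ?_
    rw [dd, if_neg (by omega), ← Real.exp_nat_mul]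
    apply le_of_eq
    congr 1
    push_cast [Nat.cast_sub (by omega : m ≤ k+1)]
    ring
end GamLemmas
/-- Application of the main theorem to uniform exponential dichotomy. Assume the linear
equation admits a uniform exponential dichotomy with constants `D, λ > 0`, the Lipschitz
constants are constant, `c_m = C > 0`, and `K(1)·CD(1+e^{-λ})/(1-e^{-λ}) < 1` with `K` from
axiom (A). Then there exists `η ∈ 𝓜` such that, with `h^n = Id_{F_n} + η^n`, for every
`m ≥ n ≥ 0` and every `φ ∈ F_n` one has `h^m(𝒜(m,n)φ) = R(m,n)(h^n(φ))`; moreover each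
`h^n : F_n → 𝓑` is one-to-one. -/
theorem stmt_14
    (ι : 𝓑 →ₗ[ℝ] (Zneg → X)) (hι : Function.Injective ι)
    (J : ℝ) (K M : ℕ → ℝ) (hAx : AxiomA ι J K M)
    (A : ℕ → 𝓑 →L[ℝ] X) (𝒜 : ℕ → ℕ → 𝓑 →L[ℝ] 𝓑)
    (hsolA : ∀ (k : ℕ) (ψ : 𝓑) (y : ℤ → X), ι ψ = seg y (k : ℤ) → IsLinSolFrom ι A y k →
      ∀ m : ℕ, k ≤ m → ι (𝒜 m k ψ) = seg y (m : ℤ))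
    -- uniform exponential dichotomy with constants `D, λ > 0`
    (P : ℕ → 𝓑 →L[ℝ] 𝓑) (hproj : ∀ n, (P n).comp (P n) = P n)
    (hcomm : ∀ m n : ℕ, n ≤ m → (P m).comp (𝒜 m n) = (𝒜 m n).comp (P n))
    (hker : ∀ (m n : ℕ) (φ : 𝓑), P n φ = 0 → P m (𝒜 m n φ) = 0)
    (hinv₁ : ∀ m n : ℕ, m ≤ n → ∀ φ : 𝓑, P n φ = 0 → 𝒜 n m (𝒜 m n φ) = φ)
    (hinv₂ : ∀ m n : ℕ, m ≤ n → ∀ φ : 𝓑, P m φ = 0 → 𝒜 m n (𝒜 n m φ) = φ)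
    (D lam : ℝ) (hD : 0 < D) (hlam : 0 < lam)
    (hdich₁ : ∀ m n : ℕ, n ≤ m →
      ‖(𝒜 m n).comp (P n)‖ ≤ D * Real.exp (-lam * ((m : ℝ) - (n : ℝ))))
    (hdich₂ : ∀ m n : ℕ, m < n →
      ‖(𝒜 m n).comp (ContinuousLinearMap.id ℝ 𝓑 - P n)‖ ≤
        D * Real.exp (-lam * ((n : ℝ) - (m : ℝ))))
    (γ : X → 𝓑) (hγ : ∀ v : X, ι (γ v) = gammaSeq v)
    -- the Lipschitz constants are constant: `c_m = C > 0`
    (f : ℕ → 𝓑 → X) (C : ℝ) (hC : 0 < C) (hf0 : ∀ m, f m 0 = 0)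
    (hf : ∀ (m : ℕ) (φ ψ : 𝓑), ‖f m φ - f m ψ‖ ≤ C * min 1 ‖φ - ψ‖)
    (R : ℕ → ℕ → 𝓑 → 𝓑)
    (hsolR : ∀ (k : ℕ) (ψ : 𝓑) (y : ℤ → X), ι ψ = seg y (k : ℤ) → IsSemiSolFrom ι A f y k →
      ∀ m : ℕ, k ≤ m → ι (R m k ψ) = seg y (m : ℤ))
    -- smallness condition `K(1) · CD(1+e^{-λ})/(1-e^{-λ}) < 1`
    (hsmall : K 1 * (C * D * (1 + Real.exp (-lam)) / (1 - Real.exp (-lam))) < 1) :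
    ∃ η : ∀ n : ℕ, Fn P n → 𝓑, inM P η ∧
      (∀ m n : ℕ, n ≤ m → ∀ φ : Fn P n,
        (kerMap 𝒜 P hker m n φ).1 + η m (kerMap 𝒜 P hker m n φ) =
          R m n (φ.1 + η n φ)) ∧
      ∀ n : ℕ, Function.Injective (fun φ : Fn P n => φ.1 + η n φ) := by
    classical
  have hJ : 0 < J := hAx.1
  have hK1 : 0 ≤ K 1 := hAx.2.1 1
  set r : ℝ := Real.exp (-lam) with hrdef
  have hr0 : 0 < r := Real.exp_pos _
  have hr1 : r < 1 := Real.exp_lt_one_iff.mpr (by linarith)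
  have h1r : 0 < 1 - r := by linarith
  -- instantiated structural lemmas
  have hCoc : ∀ (ρ : 𝓑) {a b c : ℕ}, a ≤ b → b ≤ c → 𝒜 c b (𝒜 b a ρ) = 𝒜 c a ρ :=
    fun ρ _ _ _ hab hbc => A_cocycle hι hAx hsolA ρ hab hbc
  have hself : ∀ (ρ : 𝓑) (a : ℕ), 𝒜 a a ρ = ρ := A_self hι hAx hsolA
  have hxirel : ∀ (n₀ : ℕ) (φ : 𝓑), P n₀ φ = 0 → ∀ k l, 𝒜 k l (𝒜 l n₀ φ) = 𝒜 k n₀ φ :=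
    xiRel hCoc hker hinv₁ hinv₂
  have hgchain := green_chain (𝒜 := 𝒜) (P := P) hself hCoc hproj hker hinv₁ hinv₂
  have hstep := A_step hι hAx hsolA
  have hGnorm : ∀ m k, ‖Green 𝒜 P m (k+1)‖ ≤ D * r ^ dd m k := green_norm hdich₁ hdich₂
  -- f and γ estimates
  have hflip : ∀ k (ψ ψ' : 𝓑), ‖f k ψ - f k ψ'‖ ≤ C * ‖ψ - ψ'‖ := by
    intro k ψ ψ'
    refine (hf k ψ ψ').trans ?_
    exact mul_le_mul_of_nonneg_left (min_le_right _ _) hC.le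
  have hfb : ∀ k (ψ : 𝓑), ‖f k ψ‖ ≤ C := by
    intro k ψ
    have := (hf k ψ 0).trans (mul_le_mul_of_nonneg_left (min_le_left _ _) hC.le)
    simpa [hf0 k] using this
  have hγn : ∀ v, ‖γ v‖ ≤ K 1 * ‖v‖ := gamma_norm_le hι hAx hγ
  have hγs : ∀ u v, γ (u - v) = γ u - γ v := gamma_sub hι hγ
  have hγcont : Continuous γ := by
    refine LipschitzWith.continuous (K := ⟨K 1, hK1⟩) ?_
    apply LipschitzWith.of_dist_le_mul
    intro u v
    rw [dist_eq_norm, dist_eq_norm, ← hγs u v]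
    exact hγn _
  have hfc : ∀ k, Continuous (f k) := by
    intro k
    refine LipschitzWith.continuous (K := ⟨C, hC.le⟩) ?_
    apply LipschitzWith.of_dist_le_mul
    intro u v
    rw [dist_eq_norm, dist_eq_norm]
    exact hflip k u v
  -- the Banach space of candidates
  set B₀ : ℝ := D * (K 1 * C) * ((1 + r) / (1 - r)) with hB₀def
  have hKC : 0 ≤ K 1 * C := mul_nonneg hK1 hC.le
  have hubK : ∀ (η : ∀ n : ℕ, Fn P n → 𝓑) (n : ℕ) (φ : Fn P n) (k : ℕ),
      ‖Green 𝒜 P n (k+1) (γ (f k (𝒜 k n φ.1 + η k (kerMap 𝒜 P hker k n φ))))‖ ≤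
        D * r ^ dd n k * (K 1 * C) := by
    intro η n φ k
    refine ((Green 𝒜 P n (k+1)).le_opNorm _).trans ?_
    refine mul_le_mul (hGnorm n k) ?_ (norm_nonneg _) (by positivity)
    exact (hγn _).trans (mul_le_mul_of_nonneg_left (hfb _ _) hK1)
  have hsummand : ∀ n, Summable (fun k => D * r ^ dd n k * (K 1 * C)) :=
    fun n => ((dd_summable hr0 hr1 n).mul_left D).mul_right _
  have htsum_le : ∀ n, (∑' k, D * r ^ dd n k * (K 1 * C)) ≤ B₀ := by
    intro n
    have : (fun k => D * r ^ dd n k * (K 1 * C)) = fun k => (D * (K 1 * C)) * r ^ dd n k := by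
      funext k; ring
    rw [this, tsum_mul_left, hB₀def]
    rw [mul_comm (D * (K 1 * C))]
    refine mul_le_mul_of_nonneg_right (dd_tsum_le hr0 hr1 n) (by positivity) |>.trans ?_
    rw [mul_comm]
  -- summability of the series defining Fmap, for any η
  have hFsummable : ∀ (η : ∀ n : ℕ, Fn P n → 𝓑) (n : ℕ) (φ : Fn P n),
      Summable (fun k => Green 𝒜 P n (k+1)
        (γ (f k (𝒜 k n φ.1 + η k (kerMap 𝒜 P hker k n φ))))) := by
    intro η n φ
    exact Summable.of_norm_bounded (hsummand n) (hubK η n φ)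
  -- the contraction on bounded continuous functions
  have hcont : ∀ (u : BoundedContinuousFunction (Σ n : ℕ, Fn P n) 𝓑),
      Continuous fun x : (Σ n : ℕ, Fn P n) =>
        Fmap 𝒜 P hker γ f (fun n φ => u ⟨n, φ⟩) x.1 x.2 := by
    intro u
    rw [continuous_sigma_iff]
    intro n
    show Continuous fun φ : Fn P n => Fmap 𝒜 P hker γ f (fun n φ => u ⟨n, φ⟩) n φ
    unfold Fmap
    refine continuous_tsum ?_ (hsummand n) ?_
    · intro k
      refine (Green 𝒜 P n (k+1)).continuous.comp (hγcont.comp ((hfc k).comp ?_))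
      refine Continuous.add ((𝒜 k n).continuous.comp continuous_subtype_val) ?_
      refine u.continuous.comp (Continuous.comp ?_ ?_)
      · exact continuous_sigmaMk
      · exact Continuous.subtype_mk ((𝒜 k n).continuous.comp continuous_subtype_val) _
    · intro k φ
      exact hubK (fun n φ => u ⟨n, φ⟩) n φ k
  have hbdd : ∀ (u : BoundedContinuousFunction (Σ n : ℕ, Fn P n) 𝓑) (x : Σ n : ℕ, Fn P n),
      ‖Fmap 𝒜 P hker γ f (fun n φ => u ⟨n, φ⟩) x.1 x.2‖ ≤ B₀ := by
    intro u x
    unfold Fmap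
    refine (norm_tsum_le_tsum_norm ?_).trans ?_
    · exact Summable.of_nonneg_of_le (fun k => norm_nonneg _) (hubK (fun n φ => u ⟨n, φ⟩) x.1 x.2) (hsummand x.1)
    · refine le_trans (Summable.tsum_le_tsum (hubK (fun n φ => u ⟨n, φ⟩) x.1 x.2) ?_ (hsummand x.1)) (htsum_le x.1)
      exact Summable.of_nonneg_of_le (fun k => norm_nonneg _) (hubK (fun n φ => u ⟨n, φ⟩) x.1 x.2) (hsummand x.1)
  set T : BoundedContinuousFunction (Σ n : ℕ, Fn P n) 𝓑 →
      BoundedContinuousFunction (Σ n : ℕ, Fn P n) 𝓑 := fun u =>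
    BoundedContinuousFunction.ofNormedAddCommGroup
      (fun x => Fmap 𝒜 P hker γ f (fun n φ => u ⟨n, φ⟩) x.1 x.2) (hcont u) B₀ (hbdd u)
    with hTdef
  have hT : ∀ u x, T u x = Fmap 𝒜 P hker γ f (fun n φ => u ⟨n, φ⟩) x.1 x.2 := fun u x => rfl
  set θ : ℝ := K 1 * (C * D * (1 + r) / (1 - r)) with hθdef
  have hθ0 : 0 ≤ θ := by
    rw [hθdef]
    positivity
  have hθ1 : θ < 1 := hsmall
  have hlip : ∀ u u', dist (T u) (T u') ≤ θ * dist u u' := by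
    intro u u'
    rw [BoundedContinuousFunction.dist_le (by positivity)]
    intro x
    rw [dist_eq_norm, hT, hT]
    have hdd : ∀ k, (Green 𝒜 P x.1 (k+1)
          (γ (f k (𝒜 k x.1 x.2.1 + u ⟨k, kerMap 𝒜 P hker k x.1 x.2⟩)))) -
        (Green 𝒜 P x.1 (k+1)
          (γ (f k (𝒜 k x.1 x.2.1 + u' ⟨k, kerMap 𝒜 P hker k x.1 x.2⟩)))) =
        Green 𝒜 P x.1 (k+1)
          (γ ((f k (𝒜 k x.1 x.2.1 + u ⟨k, kerMap 𝒜 P hker k x.1 x.2⟩)) -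
            (f k (𝒜 k x.1 x.2.1 + u' ⟨k, kerMap 𝒜 P hker k x.1 x.2⟩)))) := by
      intro k
      rw [hγs, map_sub]
    have hdb : ∀ k, ‖Green 𝒜 P x.1 (k+1)
          (γ ((f k (𝒜 k x.1 x.2.1 + u ⟨k, kerMap 𝒜 P hker k x.1 x.2⟩)) -
            (f k (𝒜 k x.1 x.2.1 + u' ⟨k, kerMap 𝒜 P hker k x.1 x.2⟩))))‖ ≤
        D * r ^ dd x.1 k * (K 1 * (C * dist u u')) := by
      intro k
      refine ((Green 𝒜 P x.1 (k+1)).le_opNorm _).trans ?_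
      refine mul_le_mul (hGnorm x.1 k) ?_ (norm_nonneg _) (by positivity)
      refine (hγn _).trans (mul_le_mul_of_nonneg_left ?_ hK1)
      refine (hflip k _ _).trans (mul_le_mul_of_nonneg_left ?_ hC.le)
      have : (𝒜 k x.1 x.2.1 + u ⟨k, kerMap 𝒜 P hker k x.1 x.2⟩) -
          (𝒜 k x.1 x.2.1 + u' ⟨k, kerMap 𝒜 P hker k x.1 x.2⟩) =
          u ⟨k, kerMap 𝒜 P hker k x.1 x.2⟩ - u' ⟨k, kerMap 𝒜 P hker k x.1 x.2⟩ := by abel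
      rw [this, ← dist_eq_norm]
      exact BoundedContinuousFunction.dist_coe_le_dist _
    unfold Fmap
    beta_reduce
    rw [← Summable.tsum_sub (hFsummable (fun n φ => u ⟨n, φ⟩) x.1 x.2) (hFsummable (fun n φ => u' ⟨n, φ⟩) x.1 x.2)]
    have hsum2 : Summable fun k => D * r ^ dd x.1 k * (K 1 * (C * dist u u')) :=
      ((dd_summable hr0 hr1 x.1).mul_left D).mul_right _
    refine (norm_tsum_le_tsum_norm ?_).trans ?_
    · refine Summable.of_nonneg_of_le (fun k => norm_nonneg _) (fun k => ?_) hsum2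
      rw [hdd k]
      exact hdb k
    refine le_trans (Summable.tsum_le_tsum (fun k => by rw [hdd k]; exact hdb k) ?_ hsum2) ?_
    · refine Summable.of_nonneg_of_le (fun k => norm_nonneg _) (fun k => ?_) hsum2
      rw [hdd k]
      exact hdb k
    have he : (fun k => D * r ^ dd x.1 k * (K 1 * (C * dist u u'))) =
        fun k => (D * (K 1 * (C * dist u u'))) * r ^ dd x.1 k := by
      funext k; ring
    rw [he, tsum_mul_left]
    have h1 : (D * (K 1 * (C * dist u u'))) * (∑' k, r ^ dd x.1 k) ≤
        (D * (K 1 * (C * dist u u'))) * ((1 + r) / (1 - r)) := by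
      refine mul_le_mul_of_nonneg_left (dd_tsum_le hr0 hr1 x.1) ?_
      have := dist_nonneg (x := u) (y := u')
      positivity
    refine h1.trans (le_of_eq ?_)
    rw [hθdef]
    field_simp
  have hcontr : ContractingWith θ.toNNReal T := by
    constructor
    · exact_mod_cast Real.toNNReal_lt_one.mpr hθ1
    · apply LipschitzWith.of_dist_le_mul
      intro u u'
      rw [Real.coe_toNNReal θ hθ0]
      exact hlip u u'
  set uu : BoundedContinuousFunction (Σ n : ℕ, Fn P n) 𝓑 :=
    ContractingWith.fixedPoint T hcontr with huu
  have hfixed : T uu = uu := hcontr.fixedPoint_isFixedPt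
  set η : ∀ n : ℕ, Fn P n → 𝓑 := fun n φ => uu ⟨n, φ⟩ with hηdef
  have hfix : ∀ (n : ℕ) (φ : Fn P n), η n φ = Fmap 𝒜 P hker γ f η n φ := by
    intro n φ
    conv_lhs => rw [hηdef]
    rw [← hfixed]
    exact hT uu ⟨n, φ⟩
  have hηbd : ∀ (n : ℕ) (φ : Fn P n), ‖η n φ‖ ≤ ‖uu‖ := by
    intro n φ
    exact uu.norm_coe_le_norm ⟨n, φ⟩
  -- the key conjugacy property
  have key : ∀ (n : ℕ) (φ : Fn P n) (m : ℕ), n ≤ m →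
      (kerMap 𝒜 P hker m n φ).1 + η m (kerMap 𝒜 P hker m n φ) = R m n (φ.1 + η n φ) := by
    intro n φ
    have hΞker : ∀ k, P k (𝒜 k n φ.1) = 0 := fun k => hker k n φ.1 φ.2
    set ψs : ℕ → 𝓑 := fun k => 𝒜 k n φ.1 + η k ⟨𝒜 k n φ.1, hΞker k⟩ with hψsdef
    set χ : ℕ → 𝓑 := fun k => γ (f k (ψs k)) with hχdef
    have hχnorm : ∀ k, ‖χ k‖ ≤ K 1 * C := by
      intro k
      exact (hγn _).trans (mul_le_mul_of_nonneg_left (hfb _ _) hK1)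
    have hgsum : ∀ m, Summable (fun k => Green 𝒜 P m (k+1) (χ k)) := by
      intro m
      refine Summable.of_norm_bounded (hsummand m) (fun k => ?_)
      refine ((Green 𝒜 P m (k+1)).le_opNorm _).trans ?_
      exact mul_le_mul (hGnorm m k) (hχnorm k) (norm_nonneg _) (by positivity)
    have hexp : ∀ m, η m ⟨𝒜 m n φ.1, hΞker m⟩ = ∑' k, Green 𝒜 P m (k+1) (χ k) := by
      intro m
      rw [hfix m ⟨𝒜 m n φ.1, hΞker m⟩]
      unfold Fmap
      apply tsum_congr
      intro k
      have h1 : 𝒜 k m (𝒜 m n φ.1) = 𝒜 k n φ.1 := hxirel n φ.1 φ.2 k m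
      have h2 : kerMap 𝒜 P hker k m ⟨𝒜 m n φ.1, hΞker m⟩ = ⟨𝒜 k n φ.1, hΞker k⟩ :=
        Subtype.ext h1
      rw [hχdef]
      show _ = Green 𝒜 P m (k + 1) (γ (f k (ψs k)))
      rw [hψsdef]
      beta_reduce
      rw [h2]
      show Green 𝒜 P m (k + 1) (γ (f k (𝒜 k m (𝒜 m n φ.1) + _))) = _
      rw [h1]
    have hψstep : ∀ m, ψs (m+1) = 𝒜 (m+1) m (ψs m) + χ m := by
      intro m
      have e1 : ψs (m+1) = 𝒜 (m+1) n φ.1 + ∑' k, Green 𝒜 P (m+1) (k+1) (χ k) := by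
        rw [hψsdef]
        beta_reduce
        rw [hexp (m+1)]
      have e2 : ψs m = 𝒜 m n φ.1 + ∑' k, Green 𝒜 P m (k+1) (χ k) := by
        rw [hψsdef]
        beta_reduce
        rw [hexp m]
      rw [e1, e2]
      have e3 : ∀ k, Green 𝒜 P (m+1) (k+1) (χ k) =
          𝒜 (m+1) m (Green 𝒜 P m (k+1) (χ k)) + (if k = m then χ k else 0) := by
        intro k
        have := hgchain (χ k) m k
        simpa using this
      rw [tsum_congr e3]
      have hsa : Summable (fun k => 𝒜 (m+1) m (Green 𝒜 P m (k+1) (χ k))) := by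
        refine Summable.of_norm_bounded (((hsummand m).mul_left ‖𝒜 (m+1) m‖)) (fun k => ?_)
        refine ((𝒜 (m+1) m).le_opNorm _).trans ?_
        refine mul_le_mul_of_nonneg_left ?_ (norm_nonneg _)
        refine ((Green 𝒜 P m (k+1)).le_opNorm _).trans ?_
        exact mul_le_mul (hGnorm m k) (hχnorm k) (norm_nonneg _) (by positivity)
      have hsb : Summable (fun k : ℕ => if k = m then χ k else 0) := by
        apply summable_of_ne_finset_zero (s := {m})
        intro k hk
        simp only [Finset.mem_singleton] at hk
        rw [if_neg hk]
      rw [Summable.tsum_add hsa hsb]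
      rw [tsum_eq_single m (fun b hb => if_neg hb), if_pos rfl]
      rw [← ContinuousLinearMap.map_tsum (𝒜 (m+1) m) (hgsum m)]
      have h4 : 𝒜 (m+1) m (𝒜 m n φ.1) = 𝒜 (m+1) n φ.1 := hxirel n φ.1 φ.2 (m+1) m
      rw [← h4, map_add]
      abel
    -- pointwise values of the segments
    have hval : ∀ m, ι (ψs (m+1)) ⟨0, le_refl 0⟩ = A m (ψs m) + f m (ψs m) := by
      intro m
      rw [hψstep m, map_add]
      have h1 := (hstep (ψs m) m).1
      have h2 : ι (χ m) ⟨0, le_refl 0⟩ = f m (ψs m) := by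
        rw [hχdef]
        beta_reduce
        rw [hγ]
        rfl
      show ι (𝒜 (m+1) m (ψs m)) ⟨0, le_refl 0⟩ + ι (χ m) ⟨0, le_refl 0⟩ = _
      rw [h1, h2]
    have hshift : ∀ m (j : Zneg), ∀ hj : j.1 < 0,
        ι (ψs (m+1)) j = ι (ψs m) ⟨j.1 + 1, by omega⟩ := by
      intro m j hj
      rw [hψstep m, map_add]
      have h1 := (hstep (ψs m) m).2 j hj
      have h2 : ι (χ m) j = 0 := by
        rw [hχdef]
        beta_reduce
        rw [hγ]
        simp only [gammaSeq]
        rw [if_neg (by omega)]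
      show ι (𝒜 (m+1) m (ψs m)) j + ι (χ m) j = _
      rw [h1, h2, add_zero]
    -- the semilinear solution through `ψs n`
    set y : ℤ → X := fun j =>
      if hj : j ≤ (n : ℤ) then ι (ψs n) ⟨j - n, by omega⟩ else ι (ψs j.toNat) ⟨0, le_refl 0⟩
      with hydef
    have hyseg : ∀ m, n ≤ m → ι (ψs m) = seg y (m : ℤ) := by
      intro m hm
      induction m, hm using Nat.le_induction with
      | base =>
        funext j
        show ι (ψs n) j = y ((n : ℤ) + j.1)
        simp only [hydef]
        rw [dif_pos (by omega : (n : ℤ) + j.1 ≤ (n : ℤ))]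
        exact congrArg (ι (ψs n)) (Subtype.ext (by simp))
      | succ m hm ih =>
        funext j
        rcases eq_or_lt_of_le j.2 with h | h
        · have hj0 : j = ⟨0, le_refl 0⟩ := Subtype.ext h
          subst hj0
          show ι (ψs (m+1)) _ = y (((m+1 : ℕ) : ℤ) + 0)
          simp only [hydef]
          rw [dif_neg (by push_cast; omega)]
          have ht : (((m+1 : ℕ) : ℤ) + 0).toNat = m + 1 := by omega
          rw [ht]
        · rw [hshift m j h]
          have := congrFun ih ⟨j.1 + 1, by omega⟩
          rw [this]
          show y ((m : ℤ) + (j.1 + 1)) = y (((m+1 : ℕ) : ℤ) + j.1)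
          congr 1
          push_cast
          ring
    have hsemi : IsSemiSolFrom ι A f y n := by
      intro m hm
      refine ⟨ψs m, hyseg m hm, ?_⟩
      have h1 : ((m : ℤ) + 1) = ((m+1 : ℕ) : ℤ) := by push_cast; ring
      rw [h1]
      show y _ = _
      simp only [hydef]
      rw [dif_neg (by push_cast; omega)]
      have ht : (((m+1 : ℕ) : ℤ)).toNat = m + 1 := by omega
      rw [ht]
      exact hval m
    intro m hm
    have hs := hsolR n (ψs n) y (hyseg n le_rfl) hsemi m hm
    have hR : R m n (ψs n) = ψs m := hι (hs.trans (hyseg m hm).symm)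
    have h6 : (⟨𝒜 n n φ.1, hΞker n⟩ : Fn P n) = φ := Subtype.ext (hself φ.1 n)
    have hφident : φ.1 + η n φ = ψs n := by
      rw [hψsdef]
      beta_reduce
      rw [h6, hself φ.1 n]
    rw [hφident, hR]
    rw [hψsdef]
    rfl
  refine ⟨η, ⟨?_, ⟨‖uu‖, hηbd⟩⟩, ?_, ?_⟩
  · intro n
    show Continuous fun φ : Fn P n => uu ⟨n, φ⟩
    exact uu.continuous.comp continuous_sigmaMk
  · exact fun m n hmn φ => key n φ m hmn
  · intro n φ φ' hEq
    have hEq' : φ.1 + η n φ = φ'.1 + η n φ' := hEq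
    have hP0 : P n (φ.1 - φ'.1) = 0 := by rw [map_sub, φ.2, φ'.2, sub_zero]
    have hbd : ∀ k : ℕ, ‖φ.1 - φ'.1‖ ≤ D * r ^ (k+1) * (2 * ‖uu‖) := by
      intro k
      set m := n + (k + 1) with hmdef
      have h2 := key n φ m (by omega)
      have h3 := key n φ' m (by omega)
      rw [← hEq'] at h3
      have h4 := h2.trans h3.symm
      simp only [kerMap] at h4
      have h5 : 𝒜 m n (φ.1 - φ'.1) =
          η m (kerMap 𝒜 P hker m n φ') - η m (kerMap 𝒜 P hker m n φ) := by
        simp only [kerMap]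
        rw [map_sub, sub_eq_sub_iff_add_eq_add, h4]
        exact add_comm _ _
      have h6 : ‖𝒜 m n (φ.1 - φ'.1)‖ ≤ 2 * ‖uu‖ := by
        rw [h5]
        refine (norm_sub_le _ _).trans ?_
        have := hηbd m (kerMap 𝒜 P hker m n φ')
        have := hηbd m (kerMap 𝒜 P hker m n φ)
        linarith
      have h7 : φ.1 - φ'.1 = ((𝒜 n m).comp (ContinuousLinearMap.id ℝ 𝓑 - P m))
          (𝒜 m n (φ.1 - φ'.1)) := by
        simp only [ContinuousLinearMap.comp_apply, ContinuousLinearMap.sub_apply,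
          ContinuousLinearMap.coe_id', id_eq]
        rw [hker m n _ hP0, sub_zero]
        exact (hinv₂ n m (by omega) _ hP0).symm
      calc ‖φ.1 - φ'.1‖
          = ‖((𝒜 n m).comp (ContinuousLinearMap.id ℝ 𝓑 - P m)) (𝒜 m n (φ.1 - φ'.1))‖ := by
            rw [← h7]
        _ ≤ ‖(𝒜 n m).comp (ContinuousLinearMap.id ℝ 𝓑 - P m)‖ * ‖𝒜 m n (φ.1 - φ'.1)‖ :=
            ContinuousLinearMap.le_opNorm _ _
        _ ≤ (D * Real.exp (-lam * ((m : ℝ) - (n : ℝ)))) * (2 * ‖uu‖) := by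
            refine mul_le_mul (hdich₂ n m (by omega)) h6 (norm_nonneg _) ?_
            positivity
        _ = D * r ^ (k+1) * (2 * ‖uu‖) := by
            have : Real.exp (-lam * ((m : ℝ) - (n : ℝ))) = r ^ (k+1) := by
              rw [hrdef, ← Real.exp_nat_mul]
              congr 1
              push_cast [hmdef]
              ring
            rw [this]
    have h8 : Filter.Tendsto (fun k : ℕ => r ^ (k+1)) Filter.atTop (nhds 0) :=
      (tendsto_pow_atTop_nhds_zero_of_lt_one hr0.le hr1).comp (Filter.tendsto_add_atTop_nat 1)
    have hlim : Filter.Tendsto (fun k : ℕ => D * r ^ (k+1) * (2 * ‖uu‖))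
        Filter.atTop (nhds 0) := by
      have := (h8.const_mul D).mul_const (2 * ‖uu‖)
      simpa using this
    have h9 : ‖φ.1 - φ'.1‖ ≤ 0 := ge_of_tendsto hlim (Filter.Eventually.of_forall hbd)
    have h10 : φ.1 - φ'.1 = 0 := by
      have := norm_nonneg (φ.1 - φ'.1)
      have h0 : ‖φ.1 - φ'.1‖ = 0 := le_antisymm h9 this
      rwa [norm_eq_zero] at h0
    exact Subtype.ext (sub_eq_zero.mp h10)
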